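/- arXiv:1405.3126 — 7 statements merged into one kernel-verified Lean document; each statement's English description precedes it below -/
import Mathlib

section
/- Let p and p̃ be two design measures on the design points x_1, …, x_n ∈ ℝ^q, let t ∈ [0,1), and let 0 < ε < 1. Then H((1−ε)p + εp̃) = (1−ε)H(p) + εH(p̃) + t·ε(1−ε)·g₀g₀ᵀ, where g₀ = g(p̃) − g(p). In particular, H((1−ε)p + εp̃) − {(1−ε)H(p) + εH(p̃)} is positive semidefinite. -/
open Matrix BigOperators Finset

noncomputable section

/-- A design measure: nonnegative masses summing to 1. -/
def designMeasure {n : ℕ} (p : Fin n → ℝ) : Prop :=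
  (∀ i, 0 ≤ p i) ∧ ∑ i, p i = 1

/-- G(p) = Σ pᵢ xᵢ xᵢᵀ. -/
def Gmat {q n : ℕ} (x : Fin n → Fin q → ℝ) (p : Fin n → ℝ) : Matrix (Fin q) (Fin q) ℝ :=
  ∑ i, p i • Matrix.vecMulVec (x i) (x i)

/-- g(p) = Σ pᵢ xᵢ. -/
def gvec {q n : ℕ} (x : Fin n → Fin q → ℝ) (p : Fin n → ℝ) : Fin q → ℝ :=
  ∑ i, p i • x i

/-- H(p) = G(p) − t g(p) g(p)ᵀ. -/
def Hmat {q n : ℕ} (t : ℝ) (x : Fin n → Fin q → ℝ) (p : Fin n → ℝ) : Matrix (Fin q) (Fin q) ℝ :=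
  Gmat x p - t • Matrix.vecMulVec (gvec x p) (gvec x p)

/-- ψ_{Di}(p). -/
def psiD {q n : ℕ} (t : ℝ) (x : Fin n → Fin q → ℝ) (p : Fin n → ℝ) (i : Fin n) : ℝ :=
  (1 - t) * (x i ⬝ᵥ ((Hmat t x p)⁻¹ *ᵥ x i))
    + t * ((x i - gvec x p) ⬝ᵥ ((Hmat t x p)⁻¹ *ᵥ (x i - gvec x p)))

/-- ψ_{Ai}(p). -/
def psiA {q n : ℕ} (t : ℝ) (x : Fin n → Fin q → ℝ) (p : Fin n → ℝ) (i : Fin n) : ℝ :=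
  (1 - t) * (x i ⬝ᵥ (((Hmat t x p)⁻¹ * (Hmat t x p)⁻¹) *ᵥ x i))
    + t * ((x i - gvec x p) ⬝ᵥ (((Hmat t x p)⁻¹ * (Hmat t x p)⁻¹) *ᵥ (x i - gvec x p)))

end
/-- The variance identity behind the matrix concavity of `Hmat`. -/
theorem vecMulVec_smul_add_smul {m R : Type*} [CommRing R] (u v : m → R) {a b : R}
    (hab : a + b = 1) :
    vecMulVec (a • u + b • v) (a • u + b • v)
      = a • vecMulVec u u + b • vecMulVec v v - (a * b) • vecMulVec (v - u) (v - u) := by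
  obtain rfl : b = 1 - a := eq_sub_of_add_eq' hab
  ext i j
  simp only [vecMulVec_apply, Matrix.add_apply, Matrix.sub_apply, Matrix.smul_apply, Pi.add_apply,
    Pi.sub_apply, Pi.smul_apply, smul_eq_mul]
  ring

section Design

variable {q n : ℕ} (x : Fin n → Fin q → ℝ)

theorem gvec_add (p p' : Fin n → ℝ) : gvec x (p + p') = gvec x p + gvec x p' := by
  simp only [gvec, Pi.add_apply, add_smul, sum_add_distrib]

theorem gvec_smul (c : ℝ) (p : Fin n → ℝ) : gvec x (c • p) = c • gvec x p := by
  simp only [gvec, Pi.smul_apply, smul_eq_mul, mul_smul, smul_sum]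

theorem Gmat_add (p p' : Fin n → ℝ) : Gmat x (p + p') = Gmat x p + Gmat x p' := by
  simp only [Gmat, Pi.add_apply, add_smul, sum_add_distrib]

theorem Gmat_smul (c : ℝ) (p : Fin n → ℝ) : Gmat x (c • p) = c • Gmat x p := by
  simp only [Gmat, Pi.smul_apply, smul_eq_mul, mul_smul, smul_sum]

theorem Hmat_smul_add_smul (t : ℝ) (p p' : Fin n → ℝ) {a b : ℝ} (hab : a + b = 1) :
    Hmat t x (a • p + b • p')
      = a • Hmat t x p + b • Hmat t x p'
        + (t * a * b) • vecMulVec (gvec x p' - gvec x p) (gvec x p' - gvec x p) := by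
  simp only [Hmat, Gmat_add, Gmat_smul, gvec_add, gvec_smul,
    vecMulVec_smul_add_smul (gvec x p) (gvec x p') hab]
  module

end Design

theorem statement_0_general {q n : ℕ}
    (x : Fin n → Fin q → ℝ) (t : ℝ) (ht0 : 0 ≤ t)
    (p ptilde : Fin n → ℝ)
    (ε : ℝ) (hε0 : 0 < ε) (hε1 : ε < 1) :
    Hmat t x ((1 - ε) • p + ε • ptilde)
      = (1 - ε) • Hmat t x p + ε • Hmat t x ptilde
        + (t * ε * (1 - ε)) •
            Matrix.vecMulVec (gvec x ptilde - gvec x p) (gvec x ptilde - gvec x p)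
    ∧ (Hmat t x ((1 - ε) • p + ε • ptilde)
        - ((1 - ε) • Hmat t x p + ε • Hmat t x ptilde)).PosSemidef := by
  have hconcave := Hmat_smul_add_smul x t p ptilde (sub_add_cancel 1 ε)
  rw [mul_right_comm] at hconcave
  refine ⟨hconcave, ?_⟩
  rw [hconcave, add_sub_cancel_left]
  have hcoeff : 0 ≤ t * ε * (1 - ε) := by
    have := sub_pos.mpr hε1
    positivity
  exact (posSemidef_vecMulVec_self_star _).smul hcoeff

theorem statement_0 {q n : ℕ} (hq : 1 ≤ q) (hn : 1 ≤ n)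
    (x : Fin n → Fin q → ℝ) (t : ℝ) (ht0 : 0 ≤ t) (ht1 : t < 1)
    (p ptilde : Fin n → ℝ) (hp : designMeasure p) (hpt : designMeasure ptilde)
    (ε : ℝ) (hε0 : 0 < ε) (hε1 : ε < 1) :
    Hmat t x ((1 - ε) • p + ε • ptilde)
      = (1 - ε) • Hmat t x p + ε • Hmat t x ptilde
        + (t * ε * (1 - ε)) •
            Matrix.vecMulVec (gvec x ptilde - gvec x p) (gvec x ptilde - gvec x p)
    ∧ (Hmat t x ((1 - ε) • p + ε • ptilde)
        - ((1 - ε) • Hmat t x p + ε • Hmat t x ptilde)).PosSemidef :=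
  statement_0_general x t ht0 p ptilde ε hε0 hε1
end

section
/- Let p̃ = (p̃_1, …, p̃_n) and p be design measures on the design points x_1, …, x_n ∈ ℝ^q such that H(p) is invertible, and let t ∈ [0,1). Then lim_{ε→0+} [log det H((1−ε)p + εp̃) − log det H(p)]/ε = Σ_{i=1}^n p̃_i (ψ_{Di}(p) − q). -/
open Matrix BigOperators Finset

lemma trace_mul_vecMulVec {q : ℕ} (M : Matrix (Fin q) (Fin q) ℝ) (u v : Fin q → ℝ) :
    Matrix.trace (M * Matrix.vecMulVec u v) = v ⬝ᵥ (M *ᵥ u) := by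
  simp [Matrix.trace, Matrix.diag, Matrix.mul_apply, vecMulVec_apply, dotProduct, mulVec,
    Finset.mul_sum, mul_comm, mul_left_comm]

lemma gvec_apply {q n : ℕ} (x : Fin n → Fin q → ℝ) (p : Fin n → ℝ) (j : Fin q) :
    gvec x p j = ∑ i, p i * x i j := by
  simp [gvec, Finset.sum_apply, Pi.smul_apply, smul_eq_mul]

lemma Gmat_apply {q n : ℕ} (x : Fin n → Fin q → ℝ) (p : Fin n → ℝ) (j k : Fin q) :
    Gmat x p j k = ∑ i, p i * (x i j * x i k) := by
  simp [Gmat, Matrix.sum_apply, vecMulVec_apply, mul_assoc]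
lemma Gmat_comb {q n : ℕ} (x : Fin n → Fin q → ℝ) (p pt : Fin n → ℝ) (ε : ℝ) :
    Gmat x ((1-ε) • p + ε • pt) = Gmat x p + ε • (Gmat x pt - Gmat x p) := by
  ext j k
  simp only [Gmat_apply, Matrix.add_apply, Matrix.smul_apply, Matrix.sub_apply,
    Pi.add_apply, Pi.smul_apply, smul_eq_mul, add_mul, mul_assoc,
    Finset.sum_add_distrib, ← Finset.mul_sum]
  ring

lemma gvec_comb {q n : ℕ} (x : Fin n → Fin q → ℝ) (p pt : Fin n → ℝ) (ε : ℝ) :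
    gvec x ((1-ε) • p + ε • pt) = gvec x p + ε • (gvec x pt - gvec x p) := by
  ext j
  simp only [gvec_apply, Pi.add_apply, Pi.smul_apply, Pi.sub_apply, smul_eq_mul, add_mul,
    mul_assoc, Finset.sum_add_distrib, ← Finset.mul_sum]
  ring

lemma Hmat_decomp {q n : ℕ} (t : ℝ) (x : Fin n → Fin q → ℝ) (p pt : Fin n → ℝ) (ε : ℝ) :
    Hmat t x ((1-ε) • p + ε • pt) = Hmat t x p
      + ε • (Gmat x pt - Gmat x p
          - t • (Matrix.vecMulVec (gvec x pt - gvec x p) (gvec x p)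
               + Matrix.vecMulVec (gvec x p) (gvec x pt - gvec x p)))
      + (ε^2) • ((-t) • Matrix.vecMulVec (gvec x pt - gvec x p) (gvec x pt - gvec x p)) := by
  rw [Hmat, Hmat, Gmat_comb, gvec_comb]
  ext j k
  simp only [Matrix.add_apply, Matrix.sub_apply, Matrix.smul_apply, vecMulVec_apply,
    Pi.add_apply, Pi.sub_apply, Pi.smul_apply, smul_eq_mul]
  ring
open Polynomial in
lemma hasDerivAt_det_one_add {q : ℕ} (Cm Dm : Matrix (Fin q) (Fin q) ℝ) :
    HasDerivAt (fun ε : ℝ => Matrix.det (1 + ε • Cm + ε^2 • Dm)) (Matrix.trace Cm) 0 := by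
  set P : ℝ[X] := Matrix.det (1 + (X:ℝ[X]) • Cm.map C + (X:ℝ[X])^2 • Dm.map C) with hP
  have heval : ∀ ε : ℝ, P.eval ε = Matrix.det (1 + ε • Cm + ε^2 • Dm) := by
    intro ε
    have h := RingHom.map_det (Polynomial.evalRingHom ε)
      (1 + (X:ℝ[X]) • Cm.map C + (X:ℝ[X])^2 • Dm.map C)
    simp only [coe_evalRingHom] at h
    rw [hP, h]
    congr 1
    ext i j
    simp [Matrix.map_apply, Matrix.add_apply, Matrix.smul_apply, Matrix.one_apply, apply_ite]
    ring
  have hco : P.coeff 1 = Matrix.trace Cm := by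
    have hdvd : (X:ℝ[X])^2 ∣ (P - Matrix.det (1 + (X:ℝ[X]) • Cm.map C)) := by
      rw [← Ideal.mem_span_singleton]
      rw [← Ideal.Quotient.eq_zero_iff_mem, map_sub, sub_eq_zero]
      rw [RingHom.map_det, RingHom.map_det]
      congr 1
      ext i j
      have hX2 : (Ideal.Quotient.mk (Ideal.span {(X:ℝ[X])^2})) ((X:ℝ[X])^2) = 0 := by
        rw [Ideal.Quotient.eq_zero_iff_mem]
        exact Ideal.mem_span_singleton_self _
      simp [Matrix.map_apply, Matrix.add_apply, Matrix.smul_apply, smul_eq_mul, map_add,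
        _root_.map_mul, hX2]
    have h1 := Polynomial.X_pow_dvd_iff.mp hdvd 1 (by norm_num)
    rw [Polynomial.coeff_sub, sub_eq_zero] at h1
    rw [h1, Matrix.coeff_det_one_add_X_smul_one]
  have hder : HasDerivAt (fun ε : ℝ => P.eval ε) (P.derivative.eval 0) 0 := P.hasDerivAt 0
  have : P.derivative.eval 0 = Matrix.trace Cm := by
    rw [← Polynomial.coeff_zero_eq_eval_zero, Polynomial.coeff_derivative, hco]
    norm_num
  rw [this] at hder
  exact hder.congr_deriv rfl |>.congr_of_eventuallyEq (Filter.Eventually.of_forall fun ε => (heval ε).symm) |>.congr_deriv rfl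
lemma trace_formula {q n : ℕ} (t : ℝ) (x : Fin n → Fin q → ℝ) (p pt : Fin n → ℝ)
    (hpt1 : ∑ i, pt i = 1) (hHp : IsUnit (Hmat t x p).det) :
    Matrix.trace ((Hmat t x p)⁻¹ * (Gmat x pt - Gmat x p
        - t • (Matrix.vecMulVec (gvec x pt - gvec x p) (gvec x p)
             + Matrix.vecMulVec (gvec x p) (gvec x pt - gvec x p))))
      = ∑ i, pt i * (psiD t x p i - q) := by
  set H := Hmat t x p with hH
  set Hi := (Hmat t x p)⁻¹ with hHi
  set g := gvec x p with hg
  set gt := gvec x pt with hgt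
  set A := Gmat x pt - Gmat x p
      - t • (Matrix.vecMulVec (gt - g) g + Matrix.vecMulVec g (gt - g)) with hA
  have hpsi : ∀ i, psiD t x p i
      = Matrix.trace (Hi * ((1-t) • Matrix.vecMulVec (x i) (x i)
          + t • Matrix.vecMulVec (x i - g) (x i - g))) := by
    intro i
    simp [psiD, Matrix.mul_add, Matrix.mul_smul, Matrix.trace_add, Matrix.trace_smul,
      trace_mul_vecMulVec, smul_eq_mul, ← hg, ← hHi]
  have hKH : (∑ i, pt i • ((1-t) • Matrix.vecMulVec (x i) (x i)
      + t • Matrix.vecMulVec (x i - g) (x i - g))) = H + A := by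
    ext j k
    have expand : ∀ i ∈ Finset.univ, pt i * ((1-t)*(x i j * x i k) + t*((x i j - g j)*(x i k - g k)))
        = pt i * (x i j * x i k) - t * g k * (pt i * x i j) - t * g j * (pt i * x i k)
          + (t * (g j * g k)) * pt i := by intro i _; ring
    simp only [Matrix.sum_apply, Matrix.add_apply, Matrix.smul_apply, vecMulVec_apply,
      Pi.sub_apply, smul_eq_mul]
    rw [Finset.sum_congr rfl expand]
    simp only [Finset.sum_add_distrib, Finset.sum_sub_distrib, ← Finset.mul_sum]
    have h1 : ∑ i, pt i * x i j = gt j := (gvec_apply x pt j).symm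
    have h2 : ∑ i, pt i * x i k = gt k := (gvec_apply x pt k).symm
    have h3 : ∑ i, pt i * (x i j * x i k) = Gmat x pt j k := (Gmat_apply x pt j k).symm
    rw [h1, h2, h3, hpt1]
    simp only [hH, hA, Hmat, Matrix.sub_apply, Matrix.add_apply, Matrix.smul_apply,
      vecMulVec_apply, Pi.sub_apply, smul_eq_mul, ← hg]
    ring
  have hsum : ∑ i, pt i * psiD t x p i = Matrix.trace (Hi * (H + A)) := by
    rw [← hKH, Matrix.mul_sum, Matrix.trace_sum]
    refine Finset.sum_congr rfl fun i _ => ?_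
    rw [hpsi i, Matrix.mul_smul, Matrix.trace_smul, smul_eq_mul]
  have hq : Matrix.trace (Hi * H) = (q : ℝ) := by
    rw [hHi, hH, Matrix.nonsing_inv_mul _ hHp, Matrix.trace_one]
    simp
  calc Matrix.trace (Hi * A) = ∑ i, pt i * psiD t x p i - Matrix.trace (Hi * H) := by
        rw [hsum, Matrix.mul_add, Matrix.trace_add]; ring
    _ = ∑ i, pt i * (psiD t x p i - q) := by
        rw [hq]
        simp only [mul_sub, Finset.sum_sub_distrib, ← Finset.sum_mul, hpt1, one_mul]
theorem statement_3 {q n : ℕ} (hq : 1 ≤ q) (hn : 1 ≤ n)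
    (x : Fin n → Fin q → ℝ) (t : ℝ) (ht0 : 0 ≤ t) (ht1 : t < 1)
    (p ptilde : Fin n → ℝ) (hp : designMeasure p) (hpt : designMeasure ptilde)
    (hHp : IsUnit (Hmat t x p).det) :
    Filter.Tendsto
      (fun ε : ℝ =>
        (Real.log (Hmat t x ((1 - ε) • p + ε • ptilde)).det
          - Real.log (Hmat t x p).det) / ε)
      (nhdsWithin 0 (Set.Ioi 0))
      (nhds (∑ i, ptilde i * (psiD t x p i - q))) := by
  set H := Hmat t x p with hH
  set A := Gmat x ptilde - Gmat x p
      - t • (Matrix.vecMulVec (gvec x ptilde - gvec x p) (gvec x p)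
           + Matrix.vecMulVec (gvec x p) (gvec x ptilde - gvec x p)) with hA
  set B := (-t) • Matrix.vecMulVec (gvec x ptilde - gvec x p) (gvec x ptilde - gvec x p) with hB
  set Cm := H⁻¹ * A with hCm
  set Dm := H⁻¹ * B with hDm
  have hdet : H.det ≠ 0 := by
    intro h0; rw [h0] at hHp; exact (by norm_num : ¬ IsUnit (0:ℝ)) hHp
  have hHHi : H * H⁻¹ = 1 := Matrix.mul_nonsing_inv _ hHp
  have hfac : ∀ ε : ℝ, (Hmat t x ((1-ε) • p + ε • ptilde)).det
      = H.det * (1 + ε • Cm + ε^2 • Dm).det := by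
    intro ε
    rw [Hmat_decomp, ← hH]
    have hArep : H * Cm = A := by
      rw [hCm, ← Matrix.mul_assoc, hHHi, Matrix.one_mul]
    have hBrep : H * Dm = B := by
      rw [hDm, ← Matrix.mul_assoc, hHHi, Matrix.one_mul]
    have : H + ε • A + ε^2 • B = H * (1 + ε • Cm + ε^2 • Dm) := by
      rw [Matrix.mul_add, Matrix.mul_add, Matrix.mul_one, Matrix.mul_smul, Matrix.mul_smul,
        hArep, hBrep]
    rw [← hA, ← hB, this, Matrix.det_mul]
  have hφ := hasDerivAt_det_one_add Cm Dm
  have hcF : HasDerivAt (fun ε : ℝ => H.det * (1 + ε • Cm + ε^2 • Dm).det)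
      (H.det * Matrix.trace Cm) 0 := hφ.const_mul H.det
  have hF : HasDerivAt (fun ε : ℝ => (Hmat t x ((1-ε) • p + ε • ptilde)).det)
      (H.det * Matrix.trace Cm) 0 :=
    hcF.congr_of_eventuallyEq (Filter.Eventually.of_forall fun ε => hfac ε)
  have hp0 : ((1:ℝ) - 0) • p + (0:ℝ) • ptilde = p := by simp
  have hF0 : (Hmat t x (((1:ℝ)-0) • p + (0:ℝ) • ptilde)).det = H.det := by rw [hp0, hH]
  have hFne : (fun ε : ℝ => (Hmat t x ((1-ε) • p + ε • ptilde)).det) 0 ≠ 0 := by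
    simpa [hF0] using hdet
  have hlog : HasDerivAt
      (fun ε : ℝ => Real.log ((Hmat t x ((1-ε) • p + ε • ptilde)).det))
      (Matrix.trace Cm) 0 := by
    have h := hF.log hFne
    have : H.det * Matrix.trace Cm /
        ((fun ε : ℝ => (Hmat t x ((1-ε) • p + ε • ptilde)).det) 0) = Matrix.trace Cm := by
      simp only [hF0]
      field_simp
    rwa [this] at h
  have htr : Matrix.trace Cm = ∑ i, ptilde i * (psiD t x p i - q) :=
    trace_formula t x p ptilde hpt.2 hHp
  rw [hasDerivAt_iff_tendsto_slope] at hlog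
  rw [htr] at hlog
  have heq : (fun ε : ℝ =>
      (Real.log (Hmat t x ((1 - ε) • p + ε • ptilde)).det
        - Real.log (Hmat t x p).det) / ε)
      = slope (fun ε : ℝ => Real.log ((Hmat t x ((1-ε) • p + ε • ptilde)).det)) 0 := by
    funext ε
    rw [slope_def_field]
    simp [hp0, hH]
  rw [heq]
  exact hlog.mono_left (nhdsWithin_mono 0 fun y hy =>
    Set.mem_compl_singleton_iff.mpr (ne_of_gt hy))
end

section
/- Let t ∈ [0,1), let δ > 0, and let p̂ be a design measure on the design points x_1, …, x_n ∈ ℝ^q with H(p̂) invertible. If ψ_{Di}(p̂) − q ≤ δ for every i with 1 ≤ i ≤ n, then log det H(p̂) ≥ log det H(p) − δ for every design measure p with H(p) invertible. -/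
/-!
With `Dᵢ(c) = (1 - t) xᵢxᵢᵀ + t (xᵢ - c)(xᵢ - c)ᵀ`, every design measure `p` satisfies
`∑ pᵢ Dᵢ(c) = H(p) + t (g(p) - c)(g(p) - c)ᵀ`. Taking `c = g(p)` shows that `H(p)` is positive
semidefinite; taking `c = g(p̂)` and using `ψ_{Di}(p̂) = tr(H(p̂)⁻¹ Dᵢ(g(p̂)))` gives
`tr(H(p̂)⁻¹ H(p)) ≤ ∑ pᵢ ψ_{Di}(p̂) ≤ q + δ`. Finally `log det` is concave:
`log det B ≤ log det A + tr(A⁻¹ B) - q`, which is `log λ ≤ λ - 1` applied to the eigenvalues of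
a symmetric matrix congruent to `A⁻¹ B`.
-/

open Matrix BigOperators Finset

section LogDet

variable {m : Type*} [Fintype m] [DecidableEq m]

theorem Matrix.PosDef.log_det_le_trace_sub_card {M : Matrix m m ℝ} (hM : M.PosDef) :
    Real.log M.det ≤ M.trace - Fintype.card m := by
  have hpos := hM.eigenvalues_pos
  rw [hM.isHermitian.det_eq_prod_eigenvalues, hM.isHermitian.trace_eq_sum_eigenvalues]
  simp only [RCLike.ofReal_real_eq_id, id_eq]
  rw [Real.log_prod fun i _ => (hpos i).ne', Fintype.card_eq_sum_ones, Nat.cast_sum, Nat.cast_one,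
    ← Finset.sum_sub_distrib]
  exact Finset.sum_le_sum fun i _ => Real.log_le_sub_one_of_pos (hpos i)

open scoped MatrixOrder in
theorem Matrix.PosDef.log_det_le_log_det_add_trace_inv_mul {A B : Matrix m m ℝ}
    (hA : A.PosDef) (hB : B.PosDef) :
    Real.log B.det ≤ Real.log A.det + (A⁻¹ * B).trace - Fintype.card m := by
  obtain ⟨y, hy⟩ := CStarAlgebra.nonneg_iff_eq_star_mul_self.mp hA.inv.posSemidef.nonneg
  rw [star_eq_conjTranspose] at hy
  have hdet : yᴴ.det * y.det = A.det⁻¹ := by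
    rw [← det_mul, ← hy, det_nonsing_inv, Ring.inverse_eq_inv']
  have hy_unit : IsUnit yᴴ := by
    rw [isUnit_iff_isUnit_det, isUnit_iff_ne_zero]
    intro h
    rw [h, zero_mul] at hdet
    exact (inv_ne_zero hA.det_pos.ne') hdet.symm
  have hM : (y * B * yᴴ).PosDef := by
    simpa using hB.conjTranspose_mul_mul_same (mulVec_injective_of_isUnit hy_unit)
  have hdetM : (y * B * yᴴ).det = B.det * A.det⁻¹ := by
    rw [det_mul, det_mul, ← hdet]; ring
  have htrace : (y * B * yᴴ).trace = (A⁻¹ * B).trace := by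
    rw [trace_mul_cycle, hy]
  have hlogdet := hM.log_det_le_trace_sub_card
  rw [hdetM, htrace, Real.log_mul hB.det_pos.ne' (inv_ne_zero hA.det_pos.ne'), Real.log_inv]
    at hlogdet
  linarith

end LogDet

section Design

variable {q n : ℕ}

def designTerm (t : ℝ) (x : Fin n → Fin q → ℝ) (c : Fin q → ℝ) (i : Fin n) :
    Matrix (Fin q) (Fin q) ℝ :=
  (1 - t) • vecMulVec (x i) (x i) + t • vecMulVec (x i - c) (x i - c)

theorem posSemidef_designTerm {t : ℝ} (ht0 : 0 ≤ t) (ht1 : t ≤ 1) (x : Fin n → Fin q → ℝ)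
    (c : Fin q → ℝ) (i : Fin n) : (designTerm t x c i).PosSemidef := by
  have hvv : ∀ a : Fin q → ℝ, (vecMulVec a a).PosSemidef := fun a => by
    simpa using posSemidef_vecMulVec_self_star a
  exact ((hvv _).smul (sub_nonneg.mpr ht1)).add ((hvv _).smul ht0)

theorem sum_smul_designTerm (t : ℝ) (x : Fin n → Fin q → ℝ) {p : Fin n → ℝ}
    (hp : ∑ i, p i = 1) (c : Fin q → ℝ) :
    ∑ i, p i • designTerm t x c i
      = Hmat t x p + t • vecMulVec (gvec x p - c) (gvec x p - c) := by
  ext a b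
  simp only [designTerm, Hmat, Gmat, gvec, Matrix.sum_apply, Matrix.add_apply, Matrix.sub_apply,
    Matrix.smul_apply, vecMulVec_apply, Pi.sub_apply, Finset.sum_apply, Pi.smul_apply, smul_eq_mul]
  have hterm : ∀ i, p i * ((1 - t) * (x i a * x i b) + t * ((x i a - c a) * (x i b - c b)))
      = p i * (x i a * x i b) - t * c b * (p i * x i a) - t * c a * (p i * x i b)
        + t * c a * c b * p i := fun i => by ring
  rw [Finset.sum_congr rfl fun i _ => hterm i, Finset.sum_add_distrib, Finset.sum_sub_distrib,
    Finset.sum_sub_distrib, ← Finset.mul_sum, ← Finset.mul_sum, ← Finset.mul_sum, hp]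
  ring

theorem Hmat_eq_sum_smul_designTerm (t : ℝ) (x : Fin n → Fin q → ℝ) {p : Fin n → ℝ}
    (hp : ∑ i, p i = 1) : Hmat t x p = ∑ i, p i • designTerm t x (gvec x p) i := by
  simp [sum_smul_designTerm t x hp]

theorem Hmat_posSemidef {t : ℝ} (ht0 : 0 ≤ t) (ht1 : t ≤ 1) (x : Fin n → Fin q → ℝ)
    {p : Fin n → ℝ} (hp : designMeasure p) : (Hmat t x p).PosSemidef := by
  rw [Hmat_eq_sum_smul_designTerm t x hp.2]
  exact posSemidef_sum _ fun i _ => (posSemidef_designTerm ht0 ht1 x _ i).smul (hp.1 i)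

theorem psiD_eq_trace (t : ℝ) (x : Fin n → Fin q → ℝ) (p : Fin n → ℝ) (i : Fin n) :
    psiD t x p i = ((Hmat t x p)⁻¹ * designTerm t x (gvec x p) i).trace := by
  simp only [psiD, designTerm, mul_add, mul_smul_comm, trace_add, trace_smul, mul_vecMulVec,
    trace_vecMulVec, smul_eq_mul, dotProduct_comm (x i), dotProduct_comm (x i - gvec x p)]

theorem trace_mul_Hmat_le_sum_trace_mul_designTerm {t : ℝ} (ht0 : 0 ≤ t)
    (x : Fin n → Fin q → ℝ) {p : Fin n → ℝ} (hp : ∑ i, p i = 1) (c : Fin q → ℝ)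
    {W : Matrix (Fin q) (Fin q) ℝ} (hW : W.PosSemidef) :
    (W * Hmat t x p).trace ≤ ∑ i, p i * (W * designTerm t x c i).trace := by
  have hquad : 0 ≤ (gvec x p - c) ⬝ᵥ (W *ᵥ (gvec x p - c)) := by
    simpa using hW.dotProduct_mulVec_nonneg (gvec x p - c)
  calc (W * Hmat t x p).trace
      ≤ (W * Hmat t x p).trace + t * ((gvec x p - c) ⬝ᵥ (W *ᵥ (gvec x p - c))) :=
        le_add_of_nonneg_right (mul_nonneg ht0 hquad)
    _ = (W * ∑ i, p i • designTerm t x c i).trace := by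
        rw [sum_smul_designTerm t x hp c, mul_add, trace_add, mul_smul_comm, trace_smul,
          mul_vecMulVec, trace_vecMulVec, dotProduct_comm, smul_eq_mul]
    _ = ∑ i, p i * (W * designTerm t x c i).trace := by
        simp only [Finset.mul_sum, mul_smul_comm, trace_sum, trace_smul, smul_eq_mul]

end Design

theorem statement_7_general {q n : ℕ}
    (x : Fin n → Fin q → ℝ) (t : ℝ) (ht0 : 0 ≤ t) (ht1 : t < 1)
    (δ : ℝ)
    (phat : Fin n → ℝ) (hphat : designMeasure phat)
    (hHphat : IsUnit (Hmat t x phat).det)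
    (hψ : ∀ i, psiD t x phat i - q ≤ δ) :
    ∀ p : Fin n → ℝ, designMeasure p → IsUnit (Hmat t x p).det →
      Real.log (Hmat t x phat).det ≥ Real.log (Hmat t x p).det - δ := by
  intro p hp hHp
  have hA : (Hmat t x phat).PosDef := (Hmat_posSemidef ht0 ht1.le x hphat).posDef_iff_isUnit.mpr
    ((isUnit_iff_isUnit_det _).mpr hHphat)
  have hB : (Hmat t x p).PosDef := (Hmat_posSemidef ht0 ht1.le x hp).posDef_iff_isUnit.mpr
    ((isUnit_iff_isUnit_det _).mpr hHp)
  have htrace : ((Hmat t x phat)⁻¹ * Hmat t x p).trace ≤ q + δ :=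
    calc ((Hmat t x phat)⁻¹ * Hmat t x p).trace
        ≤ ∑ i, p i * psiD t x phat i := by
          simpa only [psiD_eq_trace] using trace_mul_Hmat_le_sum_trace_mul_designTerm ht0 x hp.2
            (gvec x phat) hA.inv.posSemidef
      _ ≤ ∑ i, p i * (q + δ) :=
          Finset.sum_le_sum fun i _ => mul_le_mul_of_nonneg_left (by linarith [hψ i]) (hp.1 i)
      _ = q + δ := by rw [← Finset.sum_mul, hp.2, one_mul]
  have hlogdet := hA.log_det_le_log_det_add_trace_inv_mul hB
  rw [Fintype.card_fin] at hlogdet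
  linarith

theorem statement_7 {q n : ℕ} (hq : 1 ≤ q) (hn : 1 ≤ n)
    (x : Fin n → Fin q → ℝ) (t : ℝ) (ht0 : 0 ≤ t) (ht1 : t < 1)
    (δ : ℝ) (hδ : 0 < δ)
    (phat : Fin n → ℝ) (hphat : designMeasure phat)
    (hHphat : IsUnit (Hmat t x phat).det)
    (hψ : ∀ i, psiD t x phat i - q ≤ δ) :
    ∀ p : Fin n → ℝ, designMeasure p → IsUnit (Hmat t x p).det →
      Real.log (Hmat t x phat).det ≥ Real.log (Hmat t x p).det - δ :=
  statement_7_general x t ht0 ht1 δ phat hphat hHphat hψ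
end

section
/- For 0 ≤ t < 1, let u_t(ξ) = 1 − 2tξ − (3 − 2t)ξ² + 4tξ³ − 2t²ξ⁴. Then the equation u_t(ξ) = 0 has a unique root in the interval [1/2, 1), and this unique root ξ_t satisfies 1/2 < ξ_t < 2^{−1/2}. -/
set_option maxHeartbeats 1000000

theorem statement_9 (t : ℝ) (ht0 : 0 ≤ t) (ht1 : t < 1) :
    (∃! ξ : ℝ, ξ ∈ Set.Ico (1/2 : ℝ) 1 ∧
        1 - 2*t*ξ - (3 - 2*t)*ξ^2 + 4*t*ξ^3 - 2*t^2*ξ^4 = 0)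
    ∧ ∀ ξ : ℝ, ξ ∈ Set.Ico (1/2 : ℝ) 1 →
        1 - 2*t*ξ - (3 - 2*t)*ξ^2 + 4*t*ξ^3 - 2*t^2*ξ^4 = 0 →
        1/2 < ξ ∧ ξ < (Real.sqrt 2)⁻¹ := by
  set r : ℝ := (Real.sqrt 2)⁻¹ with hr
  have hs2 : Real.sqrt 2 ^ 2 = 2 := Real.sq_sqrt (by norm_num)
  have hspos : 0 < Real.sqrt 2 := Real.sqrt_pos.2 (by norm_num)
  have hs_lt : Real.sqrt 2 < 2 := by nlinarith
  have hs_gt : 1 < Real.sqrt 2 := by nlinarith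
  have hrpos : 0 < r := by positivity
  have hr2 : r ^ 2 = 1/2 := by
    rw [hr, inv_pow, hs2]; norm_num
  have hr_gt : 1/2 < r := by nlinarith [hr2, hrpos]
  have hr_lt : r < 1 := by nlinarith [hr2, hrpos]
  -- u < 0 for r ≤ ξ < 1
  have hneg : ∀ ξ : ℝ, r ≤ ξ → ξ < 1 →
      1 - 2*t*ξ - (3 - 2*t)*ξ^2 + 4*t*ξ^3 - 2*t^2*ξ^4 < 0 := by
    intro ξ hrx hx1
    have hx0 : 0 < ξ := lt_of_lt_of_le hrpos hrx
    have h2 : 1/2 ≤ ξ^2 := by nlinarith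
    nlinarith [mul_nonneg (by linarith : (0:ℝ) ≤ 2*ξ^2 - 1) (sq_nonneg (1-t*ξ)),
      mul_pos (mul_pos hx0 hx0) (by nlinarith : (0:ℝ) < (1-t)^2)]
  -- any root in Ico (1/2) 1 satisfies 1/2 < ξ < r
  have hbound : ∀ ξ : ℝ, ξ ∈ Set.Ico (1/2 : ℝ) 1 →
      1 - 2*t*ξ - (3 - 2*t)*ξ^2 + 4*t*ξ^3 - 2*t^2*ξ^4 = 0 →
      1/2 < ξ ∧ ξ < r := by
    intro ξ hmem heq
    obtain ⟨hx1, hx2⟩ := hmem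
    constructor
    · rcases lt_or_eq_of_le hx1 with h | h
      · exact h
      · exfalso; rw [← h] at heq; nlinarith
    · by_contra h
      push_neg at h
      exact absurd heq (ne_of_lt (hneg ξ h hx2))
  constructor
  · -- existence & uniqueness
    have hcont : ContinuousOn (fun ξ : ℝ => 1 - 2*t*ξ - (3 - 2*t)*ξ^2 + 4*t*ξ^3 - 2*t^2*ξ^4)
        (Set.Icc (1/2 : ℝ) r) := by fun_prop
    have hfr : (fun ξ : ℝ => 1 - 2*t*ξ - (3 - 2*t)*ξ^2 + 4*t*ξ^3 - 2*t^2*ξ^4) r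
        = -(1-t)^2/2 := by
      show 1 - 2*t*r - (3 - 2*t)*r^2 + 4*t*r^3 - 2*t^2*r^4 = -(1-t)^2/2
      linear_combination (-(3-2*t) + 4*t*r - 2*t^2*r^2 - t^2) * hr2
    have hfa : (fun ξ : ℝ => 1 - 2*t*ξ - (3 - 2*t)*ξ^2 + 4*t*ξ^3 - 2*t^2*ξ^4) (1/2)
        = 1/4 - t^2/8 := by norm_num; ring
    have hivt := intermediate_value_Icc' (le_of_lt hr_gt) hcont
    have h0mem : (0:ℝ) ∈ Set.Icc ((fun ξ : ℝ => 1 - 2*t*ξ - (3 - 2*t)*ξ^2 + 4*t*ξ^3 - 2*t^2*ξ^4) r)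
        ((fun ξ : ℝ => 1 - 2*t*ξ - (3 - 2*t)*ξ^2 + 4*t*ξ^3 - 2*t^2*ξ^4) (1/2)) := by
      rw [hfr, hfa]
      constructor <;> nlinarith
    obtain ⟨ξ, hξmem, hξeq⟩ := hivt h0mem
    have hξIco : ξ ∈ Set.Ico (1/2 : ℝ) 1 := ⟨hξmem.1, lt_of_le_of_lt hξmem.2 hr_lt⟩
    refine ⟨ξ, ⟨hξIco, hξeq⟩, ?_⟩
    rintro y ⟨hymem, hyeq⟩
    -- uniqueness
    obtain ⟨hy1, hy2⟩ := hbound y hymem hyeq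
    obtain ⟨hx1, hx2⟩ := hbound ξ hξIco hξeq
    have hy2' : y^2 ≤ 1/2 := by
      have := pow_lt_pow_left₀ hy2 (by linarith : (0:ℝ) ≤ y) two_ne_zero
      linarith [hr2 ▸ this]
    have hx2' : ξ^2 ≤ 1/2 := by
      have := pow_lt_pow_left₀ hx2 (by linarith : (0:ℝ) ≤ ξ) two_ne_zero
      linarith [hr2 ▸ this]
    have hE : -2*t - (3-2*t)*(y+ξ) + 4*t*(y^2+y*ξ+ξ^2) - 2*t^2*(y+ξ)*(y^2+ξ^2) < 0 := by
      have hL1 : 4*(y+ξ)*(y^2+ξ^2) ≤ -2+2*(y+ξ)+4*(y^2+y*ξ+ξ^2) := by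
        nlinarith [sq_nonneg (y-ξ), sq_nonneg (y+ξ-1),
          mul_nonneg (by linarith : (0:ℝ) ≤ y - 1/2) (by linarith : (0:ℝ) ≤ ξ - 1/2),
          sq_nonneg (y*ξ - 1/2)]
      have hL2 : -2*(y+ξ)*(y^2+ξ^2) - 2 - (y+ξ) + 4*(y^2+y*ξ+ξ^2) < 0 := by
        nlinarith [sq_nonneg (y-ξ),
          mul_nonneg (by linarith : (0:ℝ) ≤ y - 1/2) (by linarith : (0:ℝ) ≤ ξ - 1/2),
          sq_nonneg (y+ξ-1)]
      have hsA : 0 ≤ (y+ξ)*(y^2+ξ^2) := by positivity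
      nlinarith [mul_nonneg (by linarith : (0:ℝ) ≤ 1-t)
          (by linarith : (0:ℝ) ≤ -2+2*(y+ξ)+4*(y^2+y*ξ+ξ^2) - 4*(y+ξ)*(y^2+ξ^2)),
        mul_nonneg (mul_nonneg (by linarith : (0:ℝ) ≤ 1-t) (by linarith : (0:ℝ) ≤ 1-t)) hsA]
    have hfact : (y - ξ) * (-2*t - (3-2*t)*(y+ξ) + 4*t*(y^2+y*ξ+ξ^2) - 2*t^2*(y+ξ)*(y^2+ξ^2)) = 0 := by
      linear_combination hyeq - hξeq
    rcases mul_eq_zero.1 hfact with h | h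
    · linarith
    · exact absurd h (ne_of_lt hE)
  · intro ξ hmem heq
    exact ⟨(hbound ξ hmem heq).1, (hbound ξ hmem heq).2⟩
end

section
/- Let q = 2 and let the design space consist of the three binary design points x_1 = (1, 0)ᵀ, x_2 = (0, 1)ᵀ, x_3 = (1, 1)ᵀ in ℝ². For every t ∈ [0,1), the design measure p_D assigning mass 1/3 to each of x_1, x_2, x_3 is D-optimal: H(p_D) is invertible and det H(p_D) ≥ det H(p) for every design measure p on {x_1, x_2, x_3} with H(p) invertible. -/
open Matrix BigOperators Finset

/-!
Writing `e₂`, `e₃` for the elementary symmetric polynomials of `p`, a direct expansion gives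
`det H(p) = (1 - t ∑ pᵢ) e₂(p) + t e₃(p)` (so `det G = e₂`, and `det (G - g gᵀ) = e₃` when
`∑ pᵢ = 1`). For a design measure this is `(1 - t) e₂ + t e₃` with nonnegative weights, and
`e₂ ≤ 1/3`, `e₃ ≤ 1/27` (AM-GM) hold with equality at the uniform measure, whose value
`(1 - t)/3 + t/27` is positive.
-/

lemma det_Hmat_binaryDesign (t : ℝ) (p : Fin 3 → ℝ) :
    (Hmat t (![![1, 0], ![0, 1], ![1, 1]] : Fin 3 → Fin 2 → ℝ) p).det
      = (1 - t * ∑ i, p i) * (p 0 * p 1 + p 0 * p 2 + p 1 * p 2) + t * (p 0 * p 1 * p 2) := by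
  simp only [det_fin_two, Hmat, Gmat, gvec, Fin.sum_univ_three, Matrix.sub_apply, Matrix.add_apply,
    Matrix.smul_apply, vecMulVec_apply, Pi.add_apply, Pi.smul_apply, smul_eq_mul, cons_val_zero,
    cons_val_one, cons_val_two, head_cons, tail_cons]
  ring

lemma mul_add_mul_add_mul_le_of_add_add_eq_one {a b c : ℝ} (h : a + b + c = 1) :
    a * b + a * c + b * c ≤ 1 / 3 := by
  nlinarith [sq_nonneg (a - b), sq_nonneg (a - c), sq_nonneg (b - c)]

lemma mul_mul_le_of_add_add_eq_one {a b c : ℝ} (ha : 0 ≤ a) (hb : 0 ≤ b) (hc : 0 ≤ c)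
    (h : a + b + c = 1) : a * b * c ≤ 1 / 27 := by
  have hcube : (a + b + c) ^ 3 = 1 := by rw [h]; norm_num
  -- `(a + b + c)³ - 27abc = (a + b + c) ∑ (a - b)² / 2 + 3 ∑ a (b - c)²`
  nlinarith [mul_nonneg (add_nonneg (add_nonneg ha hb) hc)
      (add_nonneg (add_nonneg (sq_nonneg (a - b)) (sq_nonneg (a - c))) (sq_nonneg (b - c))),
    mul_nonneg ha (sq_nonneg (b - c)), mul_nonneg hb (sq_nonneg (a - c)),
    mul_nonneg hc (sq_nonneg (a - b))]

theorem statement_10 (t : ℝ) (ht0 : 0 ≤ t) (ht1 : t < 1) :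
    IsUnit (Hmat t (![![1, 0], ![0, 1], ![1, 1]] : Fin 3 → Fin 2 → ℝ)
        (fun _ => (1/3 : ℝ))).det
    ∧ ∀ p : Fin 3 → ℝ, designMeasure p →
        IsUnit (Hmat t (![![1, 0], ![0, 1], ![1, 1]] : Fin 3 → Fin 2 → ℝ) p).det →
        (Hmat t (![![1, 0], ![0, 1], ![1, 1]] : Fin 3 → Fin 2 → ℝ) p).det
          ≤ (Hmat t (![![1, 0], ![0, 1], ![1, 1]] : Fin 3 → Fin 2 → ℝ)
              (fun _ => (1/3 : ℝ))).det := by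
  have h_uniform : (Hmat t (![![1, 0], ![0, 1], ![1, 1]] : Fin 3 → Fin 2 → ℝ)
      (fun _ => (1/3 : ℝ))).det = (1 - t) * (1 / 3) + t * (1 / 27) := by
    rw [det_Hmat_binaryDesign]
    norm_num [Fin.sum_univ_three]
  refine ⟨?_, ?_⟩
  · rw [h_uniform]
    exact isUnit_iff_ne_zero.mpr (by linarith)
  · rintro p ⟨hp, hsum⟩ -
    rw [h_uniform, det_Hmat_binaryDesign, hsum, mul_one]
    rw [Fin.sum_univ_three] at hsum
    have he₂ := mul_add_mul_add_mul_le_of_add_add_eq_one hsum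
    have he₃ := mul_mul_le_of_add_add_eq_one (hp 0) (hp 1) (hp 2) hsum
    exact add_le_add (mul_le_mul_of_nonneg_left he₂ (by linarith))
      (mul_le_mul_of_nonneg_left he₃ ht0)
end

section
/- Let q = 2m + 1 with m ≥ 1 an integer, and let the design space Ω be the set of all nonzero vectors in {0,1}^q. Let p_odd be the design measure assigning mass n_{m+1}⁻¹, where n_{m+1} = C(q,m+1), to each design point with exactly m+1 ones and mass 0 to every other design point. Then for t ∈ [0,1), p_odd is A-optimal (H(p_odd) is invertible and tr{H(p_odd)}⁻¹ ≤ tr{H(p)}⁻¹ for every design measure p on Ω with H(p) invertible) if and only if 0 ≤ t ≤ q/(q+1). -/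
open Matrix BigOperators Finset

noncomputable section

/-- The binary design point (0/1 vector) with support `S`. -/
def ind {q : ℕ} (S : Finset (Fin q)) : Fin q → ℝ := fun i => if i ∈ S then 1 else 0

/-- A design measure on the nonzero binary vectors of length `q`, indexed by
their supports: nonnegative masses summing to 1, with zero mass on the zero vector. -/
def designMeasureB {q : ℕ} (p : Finset (Fin q) → ℝ) : Prop :=
  p ∅ = 0 ∧ (∀ S, 0 ≤ p S) ∧ ∑ S : Finset (Fin q), p S = 1

/-- G(p) = Σ p_x x xᵀ. -/
def GmatB {q : ℕ} (p : Finset (Fin q) → ℝ) : Matrix (Fin q) (Fin q) ℝ :=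
  ∑ S : Finset (Fin q), p S • Matrix.vecMulVec (ind S) (ind S)

/-- g(p) = Σ p_x x. -/
def gvecB {q : ℕ} (p : Finset (Fin q) → ℝ) : Fin q → ℝ :=
  ∑ S : Finset (Fin q), p S • ind S

/-- H(p) = G(p) − t g(p) g(p)ᵀ. -/
def HmatB {q : ℕ} (t : ℝ) (p : Finset (Fin q) → ℝ) : Matrix (Fin q) (Fin q) ℝ :=
  GmatB p - t • Matrix.vecMulVec (gvecB p) (gvecB p)

/-- The all-ones q×q matrix J_q. -/
def Jmat (q : ℕ) : Matrix (Fin q) (Fin q) ℝ := Matrix.of fun _ _ => 1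

end

/-!
The information matrix of `p_odd` is `H* = α I + γ J`, with eigenvalue `α = (m+1)/(2q)` on the
zero-sum vectors and `E = (1-t)(m+1)²/q` on the all-ones vector `𝟙`. Everything is governed by the
ratio `y = E/α = 2(1-t)(m+1)`: the condition `t ≤ q/(q+1)` says exactly `y ≥ 1`.

Sufficiency: for symmetric `B`, `0 ≤ tr ((H⁻¹ - B) H (H⁻¹ - B))` gives
`2 tr B - tr (B H B) ≤ tr H⁻¹`. Take `B = H*⁻¹`. Since `g ↦ gᵀ B² g` is convex, `tr (B H(p) B)` is
at most the `p`-average of the sensitivity function. At a point with `j` ones this is a quadratic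
in `j`, and its gap to `tr B` is a positive multiple of `(y - 1) k ((1 + y) k + y)` with
`k = j - (m+1)`, which is nonnegative for every integer `k` once `y ≥ 1`.

Necessity: moving mass `w` from `p_odd` to `𝟙` keeps `H` of the form `α I + γ J`, and the
derivative of `tr H⁻¹` at `w = 0` is a positive multiple of `y - 1`.
-/

open Topology Filter

noncomputable section

/-- `compSymm q a b` acts as `a` on vectors with zero sum and as `b` on the constant vectors. -/
def compSymm (q : ℕ) (a b : ℝ) : Matrix (Fin q) (Fin q) ℝ := a • 1 + ((b - a) / q) • Jmat q

section CompSymm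

variable {q : ℕ}

lemma Jmat_mul_self : Jmat q * Jmat q = (q : ℝ) • Jmat q := by
  ext i k
  simp [Jmat, Matrix.mul_apply]

lemma dotProduct_Jmat_mulVec (v w : Fin q → ℝ) :
    w ⬝ᵥ (Jmat q *ᵥ v) = (∑ i, w i) * ∑ i, v i := by
  simp [Jmat, dotProduct, Matrix.mulVec, Finset.sum_mul]

lemma compSymm_apply (a b : ℝ) (i k : Fin q) :
    compSymm q a b i k = (if i = k then a else 0) + (b - a) / q := by
  simp [compSymm, Jmat, Matrix.one_apply]

lemma compSymm_isHermitian (a b : ℝ) : (compSymm q a b).IsHermitian := by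
  ext i k
  simp [compSymm_apply, eq_comm]

lemma eq_compSymm_of_apply (hq : q ≠ 0) {A : Matrix (Fin q) (Fin q) ℝ} {d e : ℝ}
    (hA : ∀ i k, A i k = if i = k then d else e) :
    A = compSymm q (d - e) (d + (q - 1) * e) := by
  have hq' : (q : ℝ) ≠ 0 := Nat.cast_ne_zero.mpr hq
  ext i k
  rw [hA, compSymm_apply]
  split_ifs <;> field_simp <;> ring

lemma compSymm_mul (hq : q ≠ 0) (a b a' b' : ℝ) :
    compSymm q a b * compSymm q a' b' = compSymm q (a * a') (b * b') := by
  have hq' : (q : ℝ) ≠ 0 := Nat.cast_ne_zero.mpr hq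
  simp only [compSymm, add_mul, mul_add, smul_mul_smul, Matrix.one_mul, Matrix.mul_one,
    Jmat_mul_self, smul_smul]
  match_scalars <;> field_simp; ring

lemma compSymm_one_one : compSymm q 1 1 = 1 := by
  simp [compSymm]

lemma inv_compSymm (hq : q ≠ 0) {a b : ℝ} (ha : a ≠ 0) (hb : b ≠ 0) :
    (compSymm q a b)⁻¹ = compSymm q a⁻¹ b⁻¹ :=
  Matrix.inv_eq_right_inv <| by
    rw [compSymm_mul hq, mul_inv_cancel₀ ha, mul_inv_cancel₀ hb, compSymm_one_one]

lemma isUnit_det_compSymm (hq : q ≠ 0) {a b : ℝ} (ha : a ≠ 0) (hb : b ≠ 0) :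
    IsUnit (compSymm q a b).det :=
  Matrix.isUnit_det_of_right_inverse <| by
    rw [compSymm_mul hq, mul_inv_cancel₀ ha, mul_inv_cancel₀ hb, compSymm_one_one]

lemma trace_compSymm (hq : q ≠ 0) (a b : ℝ) : (compSymm q a b).trace = (q - 1) * a + b := by
  have hq' : (q : ℝ) ≠ 0 := Nat.cast_ne_zero.mpr hq
  simp [Matrix.trace, compSymm_apply]
  field_simp
  ring

lemma dotProduct_compSymm_mulVec (a b : ℝ) (v w : Fin q → ℝ) :
    w ⬝ᵥ (compSymm q a b *ᵥ v) = a * (w ⬝ᵥ v) + (b - a) / q * (∑ i, w i) * ∑ i, v i := by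
  simp only [compSymm, Matrix.add_mulVec, Matrix.smul_mulVec, Matrix.one_mulVec, dotProduct_add,
    dotProduct_smul, dotProduct_Jmat_mulVec, smul_eq_mul]
  ring

end CompSymm

lemma Matrix.IsHermitian.dotProduct_mulVec_comm {n : Type*} [Fintype n] {W : Matrix n n ℝ}
    (hW : W.IsHermitian) (v w : n → ℝ) : v ⬝ᵥ (W *ᵥ w) = w ⬝ᵥ (W *ᵥ v) := by
  rw [dotProduct_mulVec, ← mulVec_transpose, ← conjTranspose_eq_transpose_of_trivial, hW.eq,
    dotProduct_comm]

/-- Expanding `0 ≤ tr ((H⁻¹ - B) H (H⁻¹ - B))` gives `2 tr B - tr (B H B) ≤ tr H⁻¹`. -/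
lemma Matrix.trace_le_trace_inv_of_trace_mul_mul_le {n : Type*} [Fintype n] [DecidableEq n]
    {H B : Matrix n n ℝ} (hH : H.PosSemidef) (hdet : IsUnit H.det) (hB : B.IsHermitian)
    (h : (B * H * B).trace ≤ B.trace) : B.trace ≤ H⁻¹.trace := by
  have hX : (H⁻¹ - B).IsHermitian := hH.1.inv.sub hB
  have hnonneg : 0 ≤ ((H⁻¹ - B) * H * (H⁻¹ - B)).trace := by
    simpa only [hX.eq] using (hH.conjTranspose_mul_mul_same (H⁻¹ - B)).trace_nonneg
  have hexpand : (H⁻¹ - B) * H * (H⁻¹ - B) = H⁻¹ - B - B + B * H * B := by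
    rw [Matrix.sub_mul, Matrix.nonsing_inv_mul _ hdet, Matrix.sub_mul, Matrix.mul_sub,
      Matrix.mul_sub, Matrix.one_mul, Matrix.one_mul, Matrix.mul_assoc B H H⁻¹,
      Matrix.mul_nonsing_inv _ hdet, Matrix.mul_one]
    abel
  rw [hexpand, Matrix.trace_add, Matrix.trace_sub, Matrix.trace_sub] at hnonneg
  linarith

lemma HasDerivAt.eventually_nhdsGT_lt {f : ℝ → ℝ} {f' x : ℝ} (hf : HasDerivAt f f' x)
    (hf' : f' < 0) : ∀ᶠ y in 𝓝[>] x, f y < f x := by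
  have hslope := (hasDerivAt_iff_tendsto_slope.mp hf).mono_left (nhdsGT_le_nhdsNE x)
  filter_upwards [hslope.eventually (eventually_lt_nhds hf'), self_mem_nhdsWithin] with y hy hxy
  exact (slope_neg_iff_of_le (le_of_lt hxy)).mp hy

lemma intCast_mul_add_nonneg (k : ℤ) {y : ℝ} (hy : 0 ≤ y) : 0 ≤ (k : ℝ) * ((1 + y) * k + y) := by
  rcases le_or_gt 0 k with hk | hk
  · have hk' : (0 : ℝ) ≤ k := by exact_mod_cast hk
    positivity
  · have hk' : (k : ℝ) ≤ -1 := by exact_mod_cast Int.le_sub_one_of_lt hk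
    have h : (1 + y) * k + y ≤ -1 := by nlinarith
    exact mul_nonneg_of_nonpos_of_nonpos (by linarith) (by linarith)

section Designs

variable {q : ℕ}

lemma GmatB_apply (p : Finset (Fin q) → ℝ) (i k : Fin q) :
    GmatB p i k = ∑ S, p S * (ind S i * ind S k) := by
  simp [GmatB, Matrix.sum_apply, Matrix.vecMulVec_apply]

lemma gvecB_apply (p : Finset (Fin q) → ℝ) (i : Fin q) :
    gvecB p i = ∑ S, p S * ind S i := by
  simp [gvecB]

lemma HmatB_apply (t : ℝ) (p : Finset (Fin q) → ℝ) (i k : Fin q) :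
    HmatB t p i k = GmatB p i k - t * (gvecB p i * gvecB p k) := by
  simp [HmatB, Matrix.vecMulVec_apply]

lemma HmatB_eq_compSymm (hq : q ≠ 0) (t : ℝ) {p : Finset (Fin q) → ℝ} {d e γ : ℝ}
    (hG : ∀ i k, GmatB p i k = if i = k then d else e) (hg : ∀ i, gvecB p i = γ) :
    HmatB t p = compSymm q (d - e) (d + (q - 1) * e - q * t * γ ^ 2) := by
  refine (eq_compSymm_of_apply hq (d := d - t * γ ^ 2) (e := e - t * γ ^ 2)
    fun i k => ?_).trans ?_
  · rw [HmatB_apply, hG, hg, hg]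
    split_ifs <;> ring
  · congr 1 <;> ring

lemma sum_ind (S : Finset (Fin q)) : ∑ i, ind S i = S.card := by
  simp [ind]

lemma ind_dotProduct_ind (S : Finset (Fin q)) : ind S ⬝ᵥ ind S = S.card := by
  rw [← sum_ind]
  exact Finset.sum_congr rfl fun i _ => by by_cases h : i ∈ S <;> simp [ind, h]

lemma gvecB_dotProduct (p : Finset (Fin q) → ℝ) (v : Fin q → ℝ) :
    gvecB p ⬝ᵥ v = ∑ S, p S * (ind S ⬝ᵥ v) := by
  simp only [gvecB, _root_.sum_dotProduct, smul_dotProduct, smul_eq_mul]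

lemma GmatB_sub_vecMulVec {p : Finset (Fin q) → ℝ} (hp : ∑ S, p S = 1) :
    GmatB p - vecMulVec (gvecB p) (gvecB p)
      = ∑ S, p S • vecMulVec (ind S - gvecB p) (ind S - gvecB p) := by
  ext i k
  have expand : ∀ S, p S * ((ind S i - gvecB p i) * (ind S k - gvecB p k))
      = p S * (ind S i * ind S k) - gvecB p k * (p S * ind S i)
        - gvecB p i * (p S * ind S k) + gvecB p i * gvecB p k * p S := fun S => by ring
  simp only [Matrix.sub_apply, Matrix.sum_apply, Matrix.smul_apply, Matrix.vecMulVec_apply,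
    Pi.sub_apply, smul_eq_mul, expand, Finset.sum_add_distrib, Finset.sum_sub_distrib,
    ← Finset.mul_sum, ← GmatB_apply, ← gvecB_apply, hp]
  ring

lemma posSemidef_HmatB {t : ℝ} {p : Finset (Fin q) → ℝ} (hp : designMeasureB p)
    (ht0 : 0 ≤ t) (ht1 : t ≤ 1) : (HmatB t p).PosSemidef := by
  have hvv : ∀ v : Fin q → ℝ, (vecMulVec v v).PosSemidef := fun v => by
    simpa using Matrix.posSemidef_vecMulVec_self_star v
  have hsum : ∀ v : Finset (Fin q) → Fin q → ℝ,
      (∑ S, p S • vecMulVec (v S) (v S)).PosSemidef := fun v =>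
    Matrix.posSemidef_sum _ fun S _ => (hvv (v S)).smul (hp.2.1 S)
  have hsplit : HmatB t p
      = (1 - t) • GmatB p + t • (GmatB p - vecMulVec (gvecB p) (gvecB p)) := by
    simp only [HmatB]; module
  rw [hsplit, GmatB_sub_vecMulVec hp.2.2]
  exact ((hsum ind).smul (by linarith)).add ((hsum _).smul ht0)

lemma trace_HmatB_mul (t : ℝ) (p : Finset (Fin q) → ℝ) (W : Matrix (Fin q) (Fin q) ℝ) :
    (HmatB t p * W).trace
      = ∑ S, p S * (ind S ⬝ᵥ (W *ᵥ ind S)) - t * (gvecB p ⬝ᵥ (W *ᵥ gvecB p)) := by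
  have key : ∀ v : Fin q → ℝ, (vecMulVec v v * W).trace = v ⬝ᵥ (W *ᵥ v) := fun v => by
    rw [Matrix.trace_mul_comm, Matrix.mul_vecMulVec, Matrix.trace_vecMulVec, dotProduct_comm]
  simp only [HmatB, GmatB, Matrix.sub_mul, Finset.sum_mul, Matrix.smul_mul, Matrix.trace_sub,
    Matrix.trace_sum, Matrix.trace_smul, key, smul_eq_mul]

end Designs

section Sensitivity

variable {q : ℕ}

/-- The linearization at `g(p) = g₀` of `p ↦ tr (H(p) W)`, evaluated at the point mass at `x`; for
`W = H(p₀)⁻²` and `g₀ = g(p₀)` it is the sensitivity function of the A-criterion at `p₀`. -/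
def sensitivity (t : ℝ) (W : Matrix (Fin q) (Fin q) ℝ) (g₀ x : Fin q → ℝ) : ℝ :=
  x ⬝ᵥ (W *ᵥ x) - 2 * t * (g₀ ⬝ᵥ (W *ᵥ x)) + t * (g₀ ⬝ᵥ (W *ᵥ g₀))

lemma trace_HmatB_mul_le_sum_sensitivity {t : ℝ} {p : Finset (Fin q) → ℝ}
    {W : Matrix (Fin q) (Fin q) ℝ} (hp : ∑ S, p S = 1) (ht0 : 0 ≤ t) (hW : W.PosSemidef)
    (g₀ : Fin q → ℝ) :
    (HmatB t p * W).trace ≤ ∑ S, p S * sensitivity t W g₀ (ind S) := by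
  set g := gvecB p
  have hconvex : 2 * (g₀ ⬝ᵥ (W *ᵥ g)) - g₀ ⬝ᵥ (W *ᵥ g₀) ≤ g ⬝ᵥ (W *ᵥ g) := by
    have h := hW.dotProduct_mulVec_nonneg (g - g₀)
    rw [star_trivial, Matrix.mulVec_sub, dotProduct_sub, sub_dotProduct, sub_dotProduct,
      hW.1.dotProduct_mulVec_comm g g₀] at h
    linarith
  have hlin : ∑ S, p S * (g₀ ⬝ᵥ (W *ᵥ ind S)) = g₀ ⬝ᵥ (W *ᵥ g) := by
    simp only [hW.1.dotProduct_mulVec_comm g₀, gvecB_dotProduct, g]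
  have hsum : ∑ S, p S * sensitivity t W g₀ (ind S)
      = ∑ S, p S * (ind S ⬝ᵥ (W *ᵥ ind S)) - 2 * t * (g₀ ⬝ᵥ (W *ᵥ g))
        + t * (g₀ ⬝ᵥ (W *ᵥ g₀)) := by
    have hterm : ∀ S, p S * sensitivity t W g₀ (ind S)
        = p S * (ind S ⬝ᵥ (W *ᵥ ind S)) - 2 * t * (p S * (g₀ ⬝ᵥ (W *ᵥ ind S)))
          + t * (g₀ ⬝ᵥ (W *ᵥ g₀)) * p S := fun S => by
      simp only [sensitivity]; ring
    rw [Finset.sum_congr rfl fun S _ => hterm S, Finset.sum_add_distrib, Finset.sum_sub_distrib,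
      ← Finset.mul_sum, ← Finset.mul_sum, hp, hlin, mul_one]
  rw [trace_HmatB_mul, hsum]
  have := mul_le_mul_of_nonneg_left hconvex ht0
  linarith

/-- Sufficiency half of the equivalence theorem, with `B` in the role of `H(p₀)⁻¹`. -/
theorem trace_le_trace_inv_HmatB_of_sensitivity_le {t : ℝ} (ht0 : 0 ≤ t) (ht1 : t ≤ 1)
    {B : Matrix (Fin q) (Fin q) ℝ} (hB : B.IsHermitian) (g₀ : Fin q → ℝ)
    (hsens : ∀ S : Finset (Fin q), S ≠ ∅ → sensitivity t (B * B) g₀ (ind S) ≤ B.trace)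
    {p : Finset (Fin q) → ℝ} (hp : designMeasureB p) (hdet : IsUnit (HmatB t p).det) :
    B.trace ≤ (HmatB t p)⁻¹.trace := by
  refine Matrix.trace_le_trace_inv_of_trace_mul_mul_le (posSemidef_HmatB hp ht0 ht1) hdet hB ?_
  have hBB : (B * B).PosSemidef := by
    simpa only [hB.eq] using Matrix.posSemidef_conjTranspose_mul_self B
  calc (B * HmatB t p * B).trace = (HmatB t p * (B * B)).trace := by
        rw [Matrix.trace_mul_cycle, Matrix.trace_mul_comm]
    _ ≤ ∑ S, p S * sensitivity t (B * B) g₀ (ind S) :=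
        trace_HmatB_mul_le_sum_sensitivity hp.2.2 ht0 hBB g₀
    _ ≤ ∑ S, p S * B.trace := by
        refine Finset.sum_le_sum fun S _ => ?_
        rcases eq_or_ne S ∅ with rfl | hS
        · rw [hp.1, zero_mul, zero_mul]
        · exact mul_le_mul_of_nonneg_left (hsens S hS) (hp.2.1 S)
    _ = B.trace := by rw [← Finset.sum_mul, hp.2.2, one_mul]

lemma sensitivity_compSymm_const (hq : q ≠ 0) (t a b c : ℝ) (S : Finset (Fin q)) :
    sensitivity t (compSymm q a b) (fun _ => c) (ind S)
      = a * S.card + (b - a) / q * S.card ^ 2 - 2 * t * b * c * S.card + t * b * q * c ^ 2 := by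
  have hq' : (q : ℝ) ≠ 0 := Nat.cast_ne_zero.mpr hq
  have hc : (fun _ => c) ⬝ᵥ ind S = c * S.card := by
    rw [← sum_ind, Finset.mul_sum]; rfl
  simp only [sensitivity, dotProduct_compSymm_mulVec, ind_dotProduct_ind, sum_ind, hc,
    Finset.sum_const, Finset.card_univ, Fintype.card_fin, nsmul_eq_mul]
  simp only [dotProduct, Finset.sum_const, Finset.card_univ, Fintype.card_fin, nsmul_eq_mul]
  field_simp
  ring

end Sensitivity

section UniformDesign

variable {q r : ℕ}

def uniformDesign (q r : ℕ) : Finset (Fin q) → ℝ :=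
  fun S => if S.card = r then ((q.choose r : ℝ))⁻¹ else 0

lemma sum_ite_card_eq_and_subset (c : ℝ) {A : Finset (Fin q)} (hA : A.card ≤ r) :
    ∑ S : Finset (Fin q), (if S.card = r ∧ A ⊆ S then c else 0)
      = (q - A.card).choose (r - A.card) * c := by
  have hfilter : (Finset.univ.filter fun S : Finset (Fin q) => S.card = r ∧ A ⊆ S)
      = (Finset.univ.powersetCard r).filter (A ⊆ ·) := by
    ext S; simp
  rw [← Finset.sum_filter, Finset.sum_const, nsmul_eq_mul, hfilter,
    Finset.card_filter_powersetCard_subset A _ r (Finset.subset_univ A) hA, Finset.card_univ,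
    Fintype.card_fin]

lemma choose_pred_div_choose (hr : 1 ≤ r) (hrq : r ≤ q) :
    ((q - 1).choose (r - 1) : ℝ) / q.choose r = r / q := by
  obtain ⟨n, rfl⟩ : ∃ n, q = n + 1 := ⟨q - 1, by omega⟩
  obtain ⟨k, rfl⟩ : ∃ k, r = k + 1 := ⟨r - 1, by omega⟩
  have hpos : (0 : ℝ) < (n + 1).choose (k + 1) := by exact_mod_cast Nat.choose_pos hrq
  have h := Nat.add_one_mul_choose_eq n k
  simp only [Nat.add_sub_cancel]
  rw [div_eq_div_iff hpos.ne' (by positivity)]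
  exact_mod_cast by linarith

lemma choose_sub_two_div_choose (hr : 2 ≤ r) (hrq : r ≤ q) :
    ((q - 2).choose (r - 2) : ℝ) / q.choose r = r * (r - 1) / (q * (q - 1)) := by
  have h₁ := choose_pred_div_choose (q := q) (r := r) (by omega) hrq
  have h₂ := choose_pred_div_choose (q := q - 1) (r := r - 1) (by omega) (by omega)
  have hq1 : ((q - 1 : ℕ) : ℝ) = q - 1 := by rw [Nat.cast_sub (by omega)]; simp
  have hr1 : ((r - 1 : ℕ) : ℝ) = r - 1 := by rw [Nat.cast_sub (by omega)]; simp
  rw [Nat.sub_sub, Nat.sub_sub, hq1, hr1] at h₂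
  have hC : ((q - 1).choose (r - 1) : ℝ) ≠ 0 := by
    exact_mod_cast (Nat.choose_pos (by omega)).ne'
  rw [← div_mul_div_cancel₀ hC, h₁, h₂, div_mul_div_comm, mul_comm (q : ℝ), mul_comm (r : ℝ)]

lemma sum_uniformDesign (hrq : r ≤ q) : ∑ S, uniformDesign q r S = 1 := by
  have h := sum_ite_card_eq_and_subset (q := q) (r := r) ((q.choose r : ℝ))⁻¹
    (A := ∅) (by simp)
  simp only [Finset.empty_subset, and_true, Finset.card_empty, Nat.sub_zero] at h
  simp only [uniformDesign, h]
  exact mul_inv_cancel₀ (by exact_mod_cast (Nat.choose_pos hrq).ne')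

lemma designMeasureB_uniformDesign (hr : 1 ≤ r) (hrq : r ≤ q) :
    designMeasureB (uniformDesign q r) :=
  ⟨by rw [uniformDesign, if_neg (by simp; omega)],
    fun S => by unfold uniformDesign; split_ifs <;> positivity, sum_uniformDesign hrq⟩

lemma gvecB_uniformDesign (hr : 1 ≤ r) (hrq : r ≤ q) (i : Fin q) :
    gvecB (uniformDesign q r) i = (r / q : ℝ) := by
  have hterm : ∀ S : Finset (Fin q), uniformDesign q r S * ind S i
      = if S.card = r ∧ {i} ⊆ S then ((q.choose r : ℝ))⁻¹ else 0 := fun S => by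
    by_cases h₁ : S.card = r <;> by_cases h₂ : i ∈ S <;> simp [uniformDesign, ind, h₁, h₂]
  rw [gvecB_apply, Finset.sum_congr rfl fun S _ => hterm S,
    sum_ite_card_eq_and_subset _ (by simpa using hr), Finset.card_singleton, ← div_eq_mul_inv,
    choose_pred_div_choose hr hrq]

lemma GmatB_uniformDesign (hr : 2 ≤ r) (hrq : r ≤ q) (i k : Fin q) :
    GmatB (uniformDesign q r) i k
      = if i = k then (r / q : ℝ) else (r * (r - 1) / (q * (q - 1)) : ℝ) := by
  have hterm : ∀ S : Finset (Fin q), uniformDesign q r S * (ind S i * ind S k)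
      = if S.card = r ∧ {i, k} ⊆ S then ((q.choose r : ℝ))⁻¹ else 0 := fun S => by
    by_cases h₁ : S.card = r <;> by_cases h₂ : i ∈ S <;> by_cases h₃ : k ∈ S <;>
      simp [uniformDesign, ind, Finset.insert_subset_iff, h₁, h₂, h₃]
  rw [GmatB_apply, Finset.sum_congr rfl fun S _ => hterm S]
  split_ifs with hik
  · subst hik
    rw [Finset.insert_eq_of_mem (Finset.mem_singleton_self i),
      sum_ite_card_eq_and_subset _ (by simp; omega), Finset.card_singleton, ← div_eq_mul_inv,
      choose_pred_div_choose (by omega) hrq]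
  · have hcard : ({i, k} : Finset (Fin q)).card = 2 := Finset.card_pair hik
    rw [sum_ite_card_eq_and_subset _ (by omega), hcard, ← div_eq_mul_inv,
      choose_sub_two_div_choose hr hrq]

end UniformDesign

section MixDesign

variable {q : ℕ}

def mixDesign (p : Finset (Fin q) → ℝ) (w : ℝ) : Finset (Fin q) → ℝ :=
  fun S => (1 - w) * p S + if S = Finset.univ then w else 0

lemma mixDesign_zero (p : Finset (Fin q) → ℝ) : mixDesign p 0 = p := by
  ext S; simp [mixDesign]

lemma designMeasureB_mixDesign (hq : q ≠ 0) {p : Finset (Fin q) → ℝ} (hp : designMeasureB p)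
    {w : ℝ} (hw0 : 0 ≤ w) (hw1 : w ≤ 1) : designMeasureB (mixDesign p w) := by
  have : NeZero q := ⟨hq⟩
  have hne : (∅ : Finset (Fin q)) ≠ Finset.univ := Finset.univ_nonempty.ne_empty.symm
  refine ⟨by simp [mixDesign, hp.1, hne], fun S => ?_, ?_⟩
  · have := hp.2.1 S
    unfold mixDesign
    split_ifs <;> nlinarith
  · simp [mixDesign, Finset.sum_add_distrib, ← Finset.mul_sum, hp.2.2]

lemma GmatB_mixDesign (p : Finset (Fin q) → ℝ) (w : ℝ) (i k : Fin q) :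
    GmatB (mixDesign p w) i k = (1 - w) * GmatB p i k + w := by
  simp only [GmatB_apply, mixDesign, add_mul, mul_assoc, ite_mul, zero_mul,
    Finset.sum_add_distrib, ← Finset.mul_sum, Finset.sum_ite_eq', Finset.mem_univ, if_true]
  simp [ind]

lemma gvecB_mixDesign (p : Finset (Fin q) → ℝ) (w : ℝ) (i : Fin q) :
    gvecB (mixDesign p w) i = (1 - w) * gvecB p i + w := by
  simp only [gvecB_apply, mixDesign, add_mul, mul_assoc, ite_mul, zero_mul,
    Finset.sum_add_distrib, ← Finset.mul_sum, Finset.sum_ite_eq', Finset.mem_univ, if_true]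
  simp [ind]

end MixDesign

section OddCase

variable {m : ℕ}

/-- The eigenvalues of `H` at the design `mixDesign (uniformDesign (2m+1) (m+1)) w`: `oddEigPerp`
on the vectors with zero sum, `oddEigOnes` on the constant vectors. -/
def oddEigPerp (m : ℕ) (w : ℝ) : ℝ := (1 - w) * (m + 1) / (2 * (2 * m + 1))

def oddEigOnes (m : ℕ) (t w : ℝ) : ℝ :=
  (1 - w) * (m + 1) ^ 2 / (2 * m + 1)
    + (2 * m + 1) * (w - t * ((1 - w) * (m + 1) / (2 * m + 1) + w) ^ 2)

lemma oddEigOnes_zero (t : ℝ) : oddEigOnes m t 0 = (1 - t) * (m + 1) ^ 2 / (2 * m + 1) := by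
  unfold oddEigOnes
  field_simp
  ring

lemma oddEigPerp_pos {w : ℝ} (hw : w < 1) : 0 < oddEigPerp m w := by
  unfold oddEigPerp
  have : 0 < 1 - w := by linarith
  positivity

lemma oddEigOnes_zero_pos {t : ℝ} (ht1 : t < 1) : 0 < oddEigOnes m t 0 := by
  rw [oddEigOnes_zero]
  have : 0 < 1 - t := by linarith
  positivity

lemma HmatB_mixDesign_uniformDesign (hm : 1 ≤ m) (t w : ℝ) :
    HmatB t (mixDesign (uniformDesign (2 * m + 1) (m + 1)) w)
      = compSymm (2 * m + 1) (oddEigPerp m w) (oddEigOnes m t w) := by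
  have hm' : (m : ℝ) ≠ 0 := by positivity
  rw [HmatB_eq_compSymm (by omega) t (d := (1 - w) * ((m + 1) / (2 * m + 1)) + w)
    (e := (1 - w) * ((m + 1) * m / ((2 * m + 1) * (2 * m))) + w)
    (γ := (1 - w) * ((m + 1) / (2 * m + 1)) + w)]
  · unfold oddEigPerp oddEigOnes
    congr 1 <;> push_cast <;> field_simp <;> ring
  · intro i k
    rw [GmatB_mixDesign, GmatB_uniformDesign (by omega) (by omega)]
    split_ifs <;> push_cast <;> ring
  · intro i
    rw [gvecB_mixDesign, gvecB_uniformDesign (by omega) (by omega)]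
    push_cast; ring

lemma HmatB_uniformDesign_odd (hm : 1 ≤ m) (t : ℝ) :
    HmatB t (uniformDesign (2 * m + 1) (m + 1))
      = compSymm (2 * m + 1) (oddEigPerp m 0) (oddEigOnes m t 0) := by
  simpa only [mixDesign_zero] using HmatB_mixDesign_uniformDesign hm t 0

lemma isUnit_det_HmatB_uniformDesign_odd (hm : 1 ≤ m) {t : ℝ} (ht1 : t < 1) :
    IsUnit (HmatB t (uniformDesign (2 * m + 1) (m + 1))).det := by
  rw [HmatB_uniformDesign_odd hm]
  exact isUnit_det_compSymm (by omega) (oddEigPerp_pos zero_lt_one).ne'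
    (oddEigOnes_zero_pos ht1).ne'

lemma sensitivity_uniformDesign_odd_le {t : ℝ} (ht1 : t < 1) (hy : 1 ≤ 2 * (1 - t) * (m + 1))
    (S : Finset (Fin (2 * m + 1))) :
    sensitivity t (compSymm (2 * m + 1) (oddEigPerp m 0)⁻¹ (oddEigOnes m t 0)⁻¹
        * compSymm (2 * m + 1) (oddEigPerp m 0)⁻¹ (oddEigOnes m t 0)⁻¹)
        (fun _ => (m + 1) / (2 * m + 1)) (ind S)
      ≤ (compSymm (2 * m + 1) (oddEigPerp m 0)⁻¹ (oddEigOnes m t 0)⁻¹).trace := by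
  rw [compSymm_mul (by omega), sensitivity_compSymm_const (by omega),
    trace_compSymm (by omega), oddEigOnes_zero]
  set y : ℝ := 2 * (1 - t) * (m + 1)
  set k : ℤ := S.card - (m + 1)
  have hy0 : 0 < y := by linarith
  have hs : 1 - t ≠ 0 := by linarith
  have hfactor : 0 ≤ 4 * (2 * m + 1) * (y - 1) / ((m + 1) ^ 2 * y ^ 2) :=
    div_nonneg (mul_nonneg (by positivity) (by linarith)) (by positivity)
  rw [← sub_nonneg]
  refine (mul_nonneg hfactor (intCast_mul_add_nonneg k hy0.le)).trans_eq ?_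
  unfold oddEigPerp
  simp only [y, k]
  push_cast
  field_simp
  ring

theorem trace_inv_HmatB_uniformDesign_odd_le (hm : 1 ≤ m) {t : ℝ} (ht0 : 0 ≤ t) (ht1 : t < 1)
    (hy : 1 ≤ 2 * (1 - t) * (m + 1)) {p : Finset (Fin (2 * m + 1)) → ℝ}
    (hp : designMeasureB p) (hdet : IsUnit (HmatB t p).det) :
    (HmatB t (uniformDesign (2 * m + 1) (m + 1)))⁻¹.trace ≤ (HmatB t p)⁻¹.trace := by
  rw [HmatB_uniformDesign_odd hm, inv_compSymm (by omega) (oddEigPerp_pos zero_lt_one).ne'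
    (oddEigOnes_zero_pos ht1).ne']
  exact trace_le_trace_inv_HmatB_of_sensitivity_le ht0 ht1.le (compSymm_isHermitian _ _) _
    (fun S _ => sensitivity_uniformDesign_odd_le ht1 hy S) hp hdet

lemma hasDerivAt_oddEigPerp : HasDerivAt (oddEigPerp m) (-(m + 1) / (2 * (2 * m + 1))) 0 := by
  refine ((((hasDerivAt_id' (0 : ℝ)).const_sub 1).mul_const ((m : ℝ) + 1)).div_const
    (2 * (2 * m + 1))).congr_deriv ?_
  ring

lemma hasDerivAt_oddEigOnes (t : ℝ) :
    HasDerivAt (oddEigOnes m t)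
      (-(m + 1) ^ 2 / (2 * m + 1)
        + (2 * m + 1) * (1 - t * (2 * ((m + 1) / (2 * m + 1)) * (m / (2 * m + 1))))) 0 := by
  have hmean := ((((hasDerivAt_id' (0 : ℝ)).const_sub 1).mul_const ((m : ℝ) + 1)).div_const
    (2 * m + 1)).fun_add (hasDerivAt_id' 0)
  refine (((((hasDerivAt_id' (0 : ℝ)).const_sub 1).mul_const (((m : ℝ) + 1) ^ 2)).div_const
    (2 * m + 1)).fun_add (((hasDerivAt_id' 0).fun_sub ((hmean.fun_pow 2).const_mul t)).const_mul
      ((2 : ℝ) * m + 1))).congr_deriv ?_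
  have hq : (2 * m + 1 : ℝ) ≠ 0 := by positivity
  simp only [Nat.cast_ofNat, Nat.add_one_sub_one, pow_one]
  field_simp
  ring

lemma hasDerivAt_trace_inv_odd {t : ℝ} (ht1 : t < 1) :
    HasDerivAt (fun w => 2 * m * (oddEigPerp m w)⁻¹ + (oddEigOnes m t w)⁻¹)
      (4 * m * (2 * m + 1) * (2 * (1 - t) * (m + 1) - 1) * (2 * (1 - t) * (m + 1) * (m + 1) + m)
        / ((2 * (1 - t) * (m + 1)) ^ 2 * (m + 1) ^ 2)) 0 := by
  refine (((hasDerivAt_oddEigPerp.fun_inv (oddEigPerp_pos zero_lt_one).ne').const_mul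
    (2 * (m : ℝ))).fun_add ((hasDerivAt_oddEigOnes t).fun_inv
      (oddEigOnes_zero_pos ht1).ne')).congr_deriv ?_
  have hs : 1 - t ≠ 0 := by linarith
  rw [oddEigOnes_zero]
  unfold oddEigPerp
  field_simp
  ring

lemma trace_inv_HmatB_mixDesign_odd (hm : 1 ≤ m) {t w : ℝ} (hw : w < 1)
    (hE : oddEigOnes m t w ≠ 0) :
    (HmatB t (mixDesign (uniformDesign (2 * m + 1) (m + 1)) w))⁻¹.trace
      = 2 * m * (oddEigPerp m w)⁻¹ + (oddEigOnes m t w)⁻¹ := by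
  rw [HmatB_mixDesign_uniformDesign hm, inv_compSymm (by omega) (oddEigPerp_pos hw).ne' hE,
    trace_compSymm (by omega)]
  push_cast
  ring

theorem exists_trace_inv_HmatB_lt_uniformDesign_odd (hm : 1 ≤ m) {t : ℝ} (ht1 : t < 1)
    (hy : 2 * (1 - t) * (m + 1) < 1) :
    ∃ p : Finset (Fin (2 * m + 1)) → ℝ, designMeasureB p ∧ IsUnit (HmatB t p).det ∧
      (HmatB t p)⁻¹.trace < (HmatB t (uniformDesign (2 * m + 1) (m + 1)))⁻¹.trace := by
  have hderiv_neg : 4 * m * (2 * m + 1) * (2 * (1 - t) * (m + 1) - 1)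
      * (2 * (1 - t) * (m + 1) * (m + 1) + m)
      / ((2 * (1 - t) * (m + 1)) ^ 2 * (m + 1) ^ 2) < 0 := by
    have hm' : (0 : ℝ) < m := by exact_mod_cast hm
    have hs : 0 < 1 - t := by linarith
    refine div_neg_of_neg_of_pos ?_ (by positivity)
    refine mul_neg_of_neg_of_pos (mul_neg_of_pos_of_neg (by positivity) (by linarith)) ?_
    positivity
  have hE₀ := oddEigOnes_zero_pos (m := m) ht1
  have hlower := (hasDerivAt_trace_inv_odd ht1).eventually_nhdsGT_lt hderiv_neg
  have hEpos : ∀ᶠ w in 𝓝[>] (0 : ℝ), 0 < oddEigOnes m t w :=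
    ((hasDerivAt_oddEigOnes t).continuousAt.eventually (lt_mem_nhds hE₀)).filter_mono
      nhdsWithin_le_nhds
  have hlt_one : ∀ᶠ w in 𝓝[>] (0 : ℝ), w < 1 :=
    (eventually_lt_nhds zero_lt_one).filter_mono nhdsWithin_le_nhds
  obtain ⟨w, hfw, hEw, hw1, hw0⟩ :=
    (hlower.and (hEpos.and (hlt_one.and self_mem_nhdsWithin))).exists
  refine ⟨mixDesign (uniformDesign (2 * m + 1) (m + 1)) w,
    designMeasureB_mixDesign (by omega) (designMeasureB_uniformDesign (by omega) (by omega))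
      (le_of_lt hw0) hw1.le, ?_, ?_⟩
  · rw [HmatB_mixDesign_uniformDesign hm]
    exact isUnit_det_compSymm (by omega) (oddEigPerp_pos hw1).ne' hEw.ne'
  · rw [trace_inv_HmatB_mixDesign_odd hm hw1 hEw.ne', ← mixDesign_zero (uniformDesign _ _),
      trace_inv_HmatB_mixDesign_odd hm zero_lt_one hE₀.ne']
    exact hfw

end OddCase

end

theorem statement_15 (m : ℕ) (hm : 1 ≤ m) (t : ℝ) (ht0 : 0 ≤ t) (ht1 : t < 1) :
    (IsUnit (HmatB t (fun S : Finset (Fin (2*m+1)) =>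
          if S.card = m + 1 then ((Nat.choose (2*m+1) (m+1) : ℝ))⁻¹ else 0)).det
      ∧ ∀ p : Finset (Fin (2*m+1)) → ℝ, designMeasureB p → IsUnit (HmatB t p).det →
          Matrix.trace ((HmatB t (fun S : Finset (Fin (2*m+1)) =>
              if S.card = m + 1 then ((Nat.choose (2*m+1) (m+1) : ℝ))⁻¹ else 0))⁻¹)
            ≤ Matrix.trace ((HmatB t p)⁻¹))
    ↔ (0 ≤ t ∧ t ≤ (2*m+1 : ℝ) / ((2*m+1 : ℝ) + 1)) := by
  have hthreshold : t ≤ (2*m+1 : ℝ) / ((2*m+1 : ℝ) + 1) ↔ 1 ≤ 2 * (1 - t) * (m + 1) := by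
    rw [le_div_iff₀ (by positivity)]
    constructor <;> intro h <;> linarith
  constructor
  · rintro ⟨-, hopt⟩
    refine ⟨ht0, hthreshold.mpr (not_lt.mp fun hy => ?_)⟩
    obtain ⟨p, hp, hdet, hlt⟩ := exists_trace_inv_HmatB_lt_uniformDesign_odd hm ht1 hy
    exact (hopt p hp hdet).not_gt hlt
  · rintro ⟨-, ht⟩
    exact ⟨isUnit_det_HmatB_uniformDesign_odd hm ht1, fun p hp hdet =>
      trace_inv_HmatB_uniformDesign_odd_le hm ht0 ht1 (hthreshold.mp ht) hp hdet⟩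
end

section
/- Let q = 2m with m ≥ 2 an integer and let 0 ≤ t < 1. Define l(j, t) = {(q−1)²(1−t)² − 1}(j−m)² − q(1−t)(j−m) and t_2(q) = 1 − (1/2)(q−1)⁻²[q + {4(q−1)² + q²}^{1/2}]. Then l(j, t) ≥ 0 for every integer j with 1 ≤ j ≤ q if and only if 0 ≤ t ≤ t_2(q). -/
/-!
Put `s = 1 - t ∈ (0, 1]` and `x = j - m`, so that `l = ((q-1)²s² - 1) x² - q s x` with `x` ranging
over the integers `1 - m, …, m`. A quadratic `A x² - B x` with `B ≥ 0` is nonnegative at every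
integer exactly when it is nonnegative at `x = 1`, i.e. when `(q-1)² s² - q s - 1 ≥ 0`; for `s > 0`
this says that `s` lies beyond the positive root `(q + √(q² + 4(q-1)²)) / (2(q-1)²)` of that
quadratic in `s`, which is `t ≤ t₂(q)`.
-/

open Real

theorem quadratic_nonneg_iff_root_le {a b c s : ℝ} (ha : 0 < a) (hc : 0 ≤ c) (hs : 0 < s) :
    0 ≤ a * s ^ 2 - b * s - c ↔ (b + √(b ^ 2 + 4 * a * c)) / (2 * a) ≤ s := by
  set r := √(b ^ 2 + 4 * a * c)
  have hr_sq : r ^ 2 = b ^ 2 + 4 * a * c := sq_sqrt (by positivity)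
  have hb_le_r : b ≤ r := le_sqrt_of_sq_le (by nlinarith)
  have hfactor : a * s ^ 2 - b * s - c
      = (s - (b + r) / (2 * a)) * (a * (s - (b - r) / (2 * a))) := by
    field_simp
    linear_combination hr_sq
  have hpos : 0 < a * (s - (b - r) / (2 * a)) := by
    have : (b - r) / (2 * a) ≤ 0 := div_nonpos_of_nonpos_of_nonneg (by linarith) (by positivity)
    exact mul_pos ha (by linarith)
  rw [hfactor, mul_nonneg_iff_of_pos_right hpos, sub_nonneg]

theorem mul_sq_sub_mul_nonneg_of_le {A B : ℝ} (hB : 0 ≤ B) (hBA : B ≤ A) (x : ℤ) :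
    0 ≤ A * (x : ℝ) ^ 2 - B * x := by
  rcases le_or_gt x 0 with hx | hx
  · have hx' : (x : ℝ) ≤ 0 := by exact_mod_cast hx
    nlinarith [sq_nonneg (x : ℝ)]
  · have hx' : (1 : ℝ) ≤ x := by exact_mod_cast hx
    have : 0 ≤ A * x - B := by nlinarith
    nlinarith

theorem forall_Icc_mul_sq_sub_mul_nonneg_iff {A B : ℝ} (hB : 0 ≤ B) {lo hi c : ℤ}
    (hlo : lo ≤ c + 1) (hhi : c + 1 ≤ hi) :
    (∀ j : ℤ, lo ≤ j → j ≤ hi → 0 ≤ A * ((j : ℝ) - c) ^ 2 - B * ((j : ℝ) - c)) ↔ B ≤ A := by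
  refine ⟨fun h ↦ ?_, fun hBA j _ _ ↦ ?_⟩
  · simpa using h (c + 1) hlo hhi
  · exact_mod_cast mul_sq_sub_mul_nonneg_of_le hB hBA (j - c)

theorem statement_18 (m : ℕ) (hm : 2 ≤ m) (t : ℝ) (ht0 : 0 ≤ t) (ht1 : t < 1) :
    (∀ j : ℤ, 1 ≤ j → j ≤ (2*m : ℤ) →
        0 ≤ (((2*m : ℝ) - 1)^2 * (1 - t)^2 - 1) * ((j : ℝ) - m)^2
              - (2*m : ℝ) * (1 - t) * ((j : ℝ) - m))
    ↔ (0 ≤ t ∧ t ≤ 1 - (1/2) * (((2*m : ℝ) - 1)^2)⁻¹ *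
        ((2*m : ℝ) + Real.sqrt (4 * ((2*m : ℝ) - 1)^2 + (2*m : ℝ)^2))) := by
  set q : ℝ := 2 * m
  have hq : 4 ≤ q := by simp only [q]; norm_cast; omega
  have ha : 0 < (q - 1) ^ 2 := by nlinarith
  have hs : 0 < 1 - t := by linarith
  have hsample := forall_Icc_mul_sq_sub_mul_nonneg_iff (A := (q - 1) ^ 2 * (1 - t) ^ 2 - 1)
    (B := q * (1 - t)) (by positivity) (lo := 1) (hi := 2 * m) (c := m) (by omega) (by omega)
  have hroot := quadratic_nonneg_iff_root_le (b := q) (c := 1) ha zero_le_one hs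
  have hroot_eq : (q + √(q ^ 2 + 4 * (q - 1) ^ 2 * 1)) / (2 * (q - 1) ^ 2)
      = 1 / 2 * ((q - 1) ^ 2)⁻¹ * (q + √(4 * (q - 1) ^ 2 + q ^ 2)) := by
    rw [mul_one, add_comm (q ^ 2)]
    field_simp
  push_cast at hsample
  rw [hsample, ← sub_nonneg, show (q - 1) ^ 2 * (1 - t) ^ 2 - 1 - q * (1 - t)
    = (q - 1) ^ 2 * (1 - t) ^ 2 - q * (1 - t) - 1 by ring, hroot, hroot_eq]
  exact ⟨fun h ↦ ⟨ht0, by linarith⟩, fun ⟨_, h⟩ ↦ by linarith⟩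
end
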